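/- Let $1 < p < \infty$ and let $T$ be an operator with kernel $K$ on $\mathbb{R}^n$ satisfying $|K(x,y)| \lesssim |x-y|^{-n}$. Suppose $\sigma, \omega$ are doubling measures, and suppose that for all pairs of adjacent cubes $J, J^*$ of equal sidelength there exist pairwise disjoint subcubes $\{J_k\} \subset J$ and $\{J_k^*\} \subset J^*$ with $\ell(J_k) = \ell(J_k^*)$, $\mathrm{dist}(J_k, J_k^*) \approx \ell(J_k)$, and $\int\int \frac{\mathbf{1}_J(y) \mathbf{1}_{J^*}(x)}{|x-y|^n} d\sigma(y) d\omega(x) \lesssim \sum_k \int \mathbf{1}_{J_k^*}(x) (E_{J_k} \sigma) \, d\omega(x)$. Then the quadratic weak boundedness property constant satisfies $\mathcal{WBP}_{T,p}^{\ell^2}(\sigma, \omega) \lesssim A_p^{\ell^2, \mathrm{offset}}(\sigma, \omega)$. -/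

import Mathlib

open MeasureTheory Set ENNReal

/-- The axis-parallel half-open cube with corner `a` and sidelength `l`. -/
def cubeSet {n : ℕ} (a : Fin n → ℝ) (l : ℝ) : Set (Fin n → ℝ) :=
  {x | ∀ i, x i ∈ Set.Ico (a i) (a i + l)}

/-- The concentric dilate `rQ` of the cube `Q` with corner `a` and sidelength `l`. -/
def dilateCube {n : ℕ} (a : Fin n → ℝ) (l r : ℝ) : Set (Fin n → ℝ) :=
  cubeSet (fun i => a i - (r - 1) * l / 2) (r * l)

/-- `μ` is doubling with doubling constant `Cd`. -/
def DoublingWith {n : ℕ} (μ : Measure (Fin n → ℝ)) (Cd : ℝ≥0∞) : Prop :=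
  ∀ (a : Fin n → ℝ) (l : ℝ), 0 < l → μ (dilateCube a l 2) ≤ Cd * μ (cubeSet a l)

/-- Two distinct cubes of equal sidelength `l` that are adjacent, i.e. both are
dyadic children of a common cube of sidelength `2l`. -/
def AdjacentSiblings {n : ℕ} (a a' : Fin n → ℝ) (l : ℝ) : Prop :=
  ∃ (a0 : Fin n → ℝ) (ε ε' : Fin n → Bool), ε ≠ ε' ∧
    (∀ i, a i = a0 i + (if ε i then l else 0)) ∧
    (∀ i, a' i = a0 i + (if ε' i then l else 0))

/-- The indicator (with value `1` in `ℝ≥0∞`) of the cube with corner `a`, side `l`. -/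
noncomputable def cubeInd {n : ℕ} (a : Fin n → ℝ) (l : ℝ) (x : Fin n → ℝ) : ℝ≥0∞ :=
  (cubeSet a l).indicator (fun _ => (1 : ℝ≥0∞)) x

/-- The average `E_Q μ = |Q|_μ / |Q|`. -/
noncomputable def Eavg {n : ℕ} (μ : Measure (Fin n → ℝ)) (a : Fin n → ℝ) (l : ℝ) : ℝ≥0∞ :=
  μ (cubeSet a l) / ENNReal.ofReal (l ^ n)

/-- The quadratic weak boundedness constant `𝒲ℬ𝒫^{ℓ²}_{T,p}(σ,ω)`, as the supremum of
the relevant ratios over countable families of adjacent equal-sidelength pairs of cubes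
and coefficient sequences. -/
noncomputable def WBPconst {n : ℕ} (K : (Fin n → ℝ) → (Fin n → ℝ) → ℝ) (p p' : ℝ)
    (σ ω : Measure (Fin n → ℝ)) : ℝ≥0∞ :=
  ⨆ (ac : ℕ → (Fin n → ℝ)) (ac' : ℕ → (Fin n → ℝ)) (ls : ℕ → ℝ)
    (_ : ∀ k, 0 < ls k ∧ AdjacentSiblings (ac k) (ac' k) (ls k))
    (aa : ℕ → ℝ) (bb : ℕ → ℝ),
    (∑' k : ℕ, ENNReal.ofReal
        |∫ x in cubeSet (ac' k) (ls k),
            aa k * (∫ y in cubeSet (ac k) (ls k), K x y ∂σ) * bb k ∂ω|) /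
      ((∫⁻ x, (∑' k : ℕ, ENNReal.ofReal ((aa k) ^ 2) * cubeInd (ac k) (ls k) x) ^ (p / 2)
          ∂σ) ^ (1 / p) *
       (∫⁻ x, (∑' k : ℕ, ENNReal.ofReal ((bb k) ^ 2) * cubeInd (ac' k) (ls k) x) ^ (p' / 2)
          ∂ω) ^ (1 / p'))

/-- The offset quadratic Muckenhoupt constant `A_p^{ℓ²,offset}(σ,ω)` with offset
parameter `C0`, as the supremum of ratios over countable families of equal-sidelength
pairs of cubes at distance at most `C0` times the sidelength. -/
noncomputable def AoffConst {n : ℕ} (p C0 : ℝ) (σ ω : Measure (Fin n → ℝ)) : ℝ≥0∞ :=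
  ⨆ (ac : ℕ → (Fin n → ℝ)) (ac' : ℕ → (Fin n → ℝ)) (ls : ℕ → ℝ)
    (_ : ∀ k, 0 < ls k ∧ dist (ac k) (ac' k) ≤ C0 * ls k) (aa : ℕ → ℝ),
    (∫⁻ x, (∑' k : ℕ, ENNReal.ofReal ((aa k) ^ 2) * (Eavg σ (ac k) (ls k)) ^ 2 *
        cubeInd (ac' k) (ls k) x) ^ (p / 2) ∂ω) ^ (1 / p) /
    (∫⁻ x, (∑' k : ℕ, ENNReal.ofReal ((aa k) ^ 2) *
        cubeInd (ac k) (ls k) x) ^ (p / 2) ∂σ) ^ (1 / p)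

/-!
The kernel bound and the Whitney hypothesis dominate each pairing
`⟨T_σ (a_J 1_J), b_J 1_{J*}⟩_ω` by `|a_J| |b_J| ∑_k E_{J_k} σ · ω(J_k*)`, that is by
`|a_J| |b_J| ∫ ∑_k E_{J_k} σ 1_{J_k*} dω`. Since the `J_k*` are disjoint subcubes of `J*`,
Cauchy–Schwarz in `J` bounds the integrand pointwise by
`(∑_{J,k} a_J² (E_{J_k} σ)² 1_{J_k*})^{1/2} (∑_J b_J² 1_{J*})^{1/2}`, and Hölder in
`L^p(ω) × L^{p'}(ω)` splits the integral. The first factor is controlled by the offset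
Muckenhoupt constant of the family of pairs `(J_k, J_k*)` with coefficients `a_J`, and
`∑_{J,k} a_J² 1_{J_k} ≤ ∑_J a_J² 1_J` because the `J_k` are disjoint subcubes of `J`.
-/

theorem ENNReal.inner_le_Lp_mul_Lq_tsum {ι : Type*} (f g : ι → ℝ≥0∞) {p q : ℝ}
    (hpq : p.HolderConjugate q) :
    ∑' i, f i * g i ≤ (∑' i, f i ^ p) ^ (1 / p) * (∑' i, g i ^ q) ^ (1 / q) := by
  rw [ENNReal.tsum_eq_iSup_sum]
  refine iSup_le fun s => (ENNReal.inner_le_Lp_mul_Lq s f g hpq).trans ?_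
  have := hpq.symm.pos
  have := hpq.pos
  gcongr <;> exact ENNReal.sum_le_tsum s

theorem ENNReal.lintegral_rpow_half_mul_le {α : Type*} [MeasurableSpace α] (μ : Measure α)
    {p q : ℝ} (hpq : p.HolderConjugate q) {f g : α → ℝ≥0∞} (hf : AEMeasurable f μ)
    (hg : AEMeasurable g μ) :
    ∫⁻ x, f x ^ (1 / 2 : ℝ) * g x ^ (1 / 2 : ℝ) ∂μ ≤
      (∫⁻ x, f x ^ (p / 2) ∂μ) ^ (1 / p) * (∫⁻ x, g x ^ (q / 2) ∂μ) ^ (1 / q) := by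
  have h := ENNReal.lintegral_mul_le_Lp_mul_Lq μ hpq (hf.pow_const (1 / 2 : ℝ))
    (hg.pow_const (1 / 2 : ℝ))
  simpa only [Pi.mul_apply, ← ENNReal.rpow_mul, one_div_mul_eq_div] using h

theorem ENNReal.ofReal_abs_sq (r : ℝ) : ENNReal.ofReal |r| ^ 2 = ENNReal.ofReal (r ^ 2) := by
  rw [← ENNReal.ofReal_pow (abs_nonneg r), sq_abs]

theorem ENNReal.div_mul_le_of_le_mul {a b c x y : ℝ≥0∞} (ha : a ≤ b * y)
    (hb : x ≠ ∞ → b ≤ c * x) : a / (x * y) ≤ c := by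
  rcases eq_or_ne x ∞ with rfl | hx
  · rcases eq_or_ne y 0 with rfl | hy
    · simp_all
    · simp [ENNReal.top_mul hy]
  · refine ENNReal.div_le_of_le_mul (ha.trans ?_)
    rw [← mul_assoc]
    gcongr
    exact hb hx

theorem ENNReal.le_mul_of_div_le {a b c : ℝ≥0∞} (h : a / b ≤ c) (hb : b ≠ ∞)
    (h0 : b = 0 → a = 0) : a ≤ c * b := by
  rcases eq_or_ne b 0 with rfl | hb0
  · simp [h0 rfl]
  · exact (ENNReal.div_le_iff hb0 hb).1 h

theorem enorm_setIntegral_le_of_abs_le_div_dist_pow {X : Type*} [PseudoMetricSpace X]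
    [MeasurableSpace X] {σ : Measure X} {K : X → X → ℝ} {CK : ℝ} {n : ℕ}
    (hK : ∀ x y, x ≠ y → |K x y| ≤ CK / dist x y ^ n) {Q : Set X} (hQ : MeasurableSet Q)
    {x : X} (hx : x ∉ Q) :
    ‖∫ y in Q, K x y ∂σ‖ₑ ≤
      ENNReal.ofReal CK * ∫⁻ y in Q, ENNReal.ofReal (1 / dist x y ^ n) ∂σ := by
  calc ‖∫ y in Q, K x y ∂σ‖ₑ ≤ ∫⁻ y in Q, ‖K x y‖ₑ ∂σ := enorm_integral_le_lintegral_enorm _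
    _ ≤ ∫⁻ y in Q, ENNReal.ofReal CK * ENNReal.ofReal (1 / dist x y ^ n) ∂σ := by
      refine setLIntegral_mono' hQ fun y hy => ?_
      rw [Real.enorm_eq_ofReal_abs, ← ENNReal.ofReal_mul' (by positivity), ← div_eq_mul_one_div]
      exact ENNReal.ofReal_le_ofReal (hK x y fun h => hx (h ▸ hy))
    _ = _ := lintegral_const_mul' _ _ ofReal_ne_top

theorem ofReal_abs_setIntegral_kernel_le {X : Type*} [PseudoMetricSpace X]
    [MeasurableSpace X] {σ ω : Measure X} {K : X → X → ℝ} {CK : ℝ} {n : ℕ}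
    (hK : ∀ x y, x ≠ y → |K x y| ≤ CK / dist x y ^ n) {Q Q' : Set X} (hQ : MeasurableSet Q)
    (hQ' : MeasurableSet Q') (hQQ' : Disjoint Q Q') (a b : ℝ) :
    ENNReal.ofReal |∫ x in Q', a * (∫ y in Q, K x y ∂σ) * b ∂ω| ≤
      ENNReal.ofReal |a| * ENNReal.ofReal |b| * ENNReal.ofReal CK *
        ∫⁻ x in Q', ∫⁻ y in Q, ENNReal.ofReal (1 / dist x y ^ n) ∂σ ∂ω := by
  rw [← Real.enorm_eq_ofReal_abs, ← lintegral_const_mul' _ _ (by finiteness)]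
  refine (enorm_integral_le_lintegral_enorm _).trans (setLIntegral_mono' hQ' fun x hx => ?_)
  rw [enorm_mul, enorm_mul, Real.enorm_eq_ofReal_abs a, Real.enorm_eq_ofReal_abs b, mul_right_comm,
    mul_assoc _ (ENNReal.ofReal CK)]
  gcongr
  exact enorm_setIntegral_le_of_abs_le_div_dist_pow hK hQ (hQQ'.notMem_of_mem_right hx)

section Cubes

variable {n : ℕ}

theorem measurableSet_cubeSet (a : Fin n → ℝ) (l : ℝ) : MeasurableSet (cubeSet a l) := by
  have : cubeSet a l = Set.univ.pi fun i => Ico (a i) (a i + l) := by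
    ext x; simp [cubeSet, Set.mem_pi]
  exact this ▸ MeasurableSet.univ_pi fun _ => measurableSet_Ico

@[fun_prop]
theorem measurable_cubeInd (a : Fin n → ℝ) (l : ℝ) : Measurable (cubeInd a l) :=
  measurable_const.indicator (measurableSet_cubeSet a l)

theorem cubeInd_of_mem {a : Fin n → ℝ} {l : ℝ} {x : Fin n → ℝ} (hx : x ∈ cubeSet a l) :
    cubeInd a l x = 1 :=
  indicator_of_mem hx _

theorem cubeInd_of_notMem {a : Fin n → ℝ} {l : ℝ} {x : Fin n → ℝ} (hx : x ∉ cubeSet a l) :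
    cubeInd a l x = 0 :=
  indicator_of_notMem hx _

theorem cubeInd_sq (a : Fin n → ℝ) (l : ℝ) (x : Fin n → ℝ) : cubeInd a l x ^ 2 = cubeInd a l x := by
  by_cases hx : x ∈ cubeSet a l <;> simp [cubeInd_of_mem, cubeInd_of_notMem, hx]

theorem cubeSet_eq_empty_of_nonpos [Nonempty (Fin n)] (a : Fin n → ℝ) {l : ℝ} (hl : l ≤ 0) :
    cubeSet a l = ∅ := by
  refine eq_empty_of_forall_notMem fun x hx => ?_
  obtain ⟨h₁, h₂⟩ := hx (Classical.arbitrary _)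
  linarith

theorem cubeInd_eq_zero_of_nonpos [Nonempty (Fin n)] (a : Fin n → ℝ) {l : ℝ} (hl : l ≤ 0)
    (x : Fin n → ℝ) : cubeInd a l x = 0 :=
  cubeInd_of_notMem (by simp [cubeSet_eq_empty_of_nonpos a hl])

theorem AdjacentSiblings.nonempty {a a' : Fin n → ℝ} {l : ℝ} (h : AdjacentSiblings a a' l) :
    Nonempty (Fin n) := by
  obtain ⟨_, ε, ε', hεε', -⟩ := h
  exact ⟨(Function.ne_iff.mp hεε').choose⟩

theorem AdjacentSiblings.disjoint {a a' : Fin n → ℝ} {l : ℝ}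
    (h : AdjacentSiblings a a' l) : Disjoint (cubeSet a l) (cubeSet a' l) := by
  obtain ⟨a0, ε, ε', hεε', ha, ha'⟩ := h
  obtain ⟨i, hi⟩ := Function.ne_iff.mp hεε'
  refine Set.disjoint_left.mpr fun x hx hx' => ?_
  have h₁ := hx i
  have h₂ := hx' i
  simp only [ha i, ha' i, mem_Ico] at h₁ h₂
  cases hε : ε i <;> cases hε' : ε' i <;> simp_all <;> linarith

noncomputable def cubeSum {ι : Type*} (c : ι → ℝ≥0∞) (B : ι → Fin n → ℝ) (L : ι → ℝ)
    (x : Fin n → ℝ) : ℝ≥0∞ :=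
  ∑' i, c i * cubeInd (B i) (L i) x

section cubeSum

variable {ι κ : Type*} {c : ι → ℝ≥0∞} {B : ι → Fin n → ℝ} {L : ι → ℝ} {x : Fin n → ℝ}

@[fun_prop]
theorem measurable_cubeSum [Countable ι] (c : ι → ℝ≥0∞) (B : ι → Fin n → ℝ) (L : ι → ℝ) :
    Measurable (cubeSum c B L) :=
  Measurable.tsum fun _ => (measurable_cubeInd _ _).const_mul _

theorem lintegral_cubeSum [Countable ι] (μ : Measure (Fin n → ℝ)) (c : ι → ℝ≥0∞)
    (B : ι → Fin n → ℝ) (L : ι → ℝ) :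
    ∫⁻ x, cubeSum c B L x ∂μ = ∑' i, c i * μ (cubeSet (B i) (L i)) := by
  unfold cubeSum
  rw [lintegral_tsum (by fun_prop)]
  refine tsum_congr fun i => ?_
  rw [lintegral_const_mul _ (measurable_cubeInd _ _)]
  simp only [cubeInd, lintegral_indicator_const (measurableSet_cubeSet _ _), one_mul]

theorem cubeSum_eq_of_mem
    (hB : Pairwise fun i j => Disjoint (cubeSet (B i) (L i)) (cubeSet (B j) (L j)))
    (c : ι → ℝ≥0∞) {i : ι} (hx : x ∈ cubeSet (B i) (L i)) : cubeSum c B L x = c i := by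
  rw [cubeSum, tsum_eq_single i fun j hj => ?_, cubeInd_of_mem hx, mul_one]
  rw [cubeInd_of_notMem fun hxj => Set.disjoint_left.mp (hB hj) hxj hx, mul_zero]

theorem cubeSum_eq_zero_of_forall_notMem (c : ι → ℝ≥0∞) (hx : ∀ i, x ∉ cubeSet (B i) (L i)) :
    cubeSum c B L x = 0 := by
  simp [cubeSum, cubeInd_of_notMem (hx _)]

theorem cubeSum_sq
    (hB : Pairwise fun i j => Disjoint (cubeSet (B i) (L i)) (cubeSet (B j) (L j)))
    (c : ι → ℝ≥0∞) (x : Fin n → ℝ) : cubeSum c B L x ^ 2 = cubeSum (fun i => c i ^ 2) B L x := by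
  by_cases hx : ∃ i, x ∈ cubeSet (B i) (L i)
  · obtain ⟨i, hi⟩ := hx
    rw [cubeSum_eq_of_mem hB _ hi, cubeSum_eq_of_mem hB _ hi]
  · push Not at hx
    simp [cubeSum_eq_zero_of_forall_notMem _ hx]

theorem cubeSum_le_mul_cubeInd
    (hB : Pairwise fun i j => Disjoint (cubeSet (B i) (L i)) (cubeSet (B j) (L j)))
    {a : Fin n → ℝ} {l : ℝ} (hBa : ∀ i, cubeSet (B i) (L i) ⊆ cubeSet a l) {d : ℝ≥0∞}
    (hcd : ∀ i, c i ≤ d) (x : Fin n → ℝ) : cubeSum c B L x ≤ d * cubeInd a l x := by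
  by_cases hx : ∃ i, x ∈ cubeSet (B i) (L i)
  · obtain ⟨i, hi⟩ := hx
    rw [cubeSum_eq_of_mem hB _ hi, cubeInd_of_mem (hBa i hi), mul_one]
    exact hcd i
  · push Not at hx
    simp [cubeSum_eq_zero_of_forall_notMem _ hx]

theorem cubeSum_mul_cubeInd {a : Fin n → ℝ} {l : ℝ} (hBa : ∀ i, cubeSet (B i) (L i) ⊆ cubeSet a l)
    (c : ι → ℝ≥0∞) (x : Fin n → ℝ) : cubeSum c B L x * cubeInd a l x = cubeSum c B L x := by
  by_cases hx : x ∈ cubeSet a l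
  · rw [cubeInd_of_mem hx, mul_one]
  · rw [cubeInd_of_notMem hx, mul_zero,
      cubeSum_eq_zero_of_forall_notMem _ fun i hi => hx (hBa i hi)]

theorem cubeSum_comp_equiv (e : κ ≃ ι) (c : ι → ℝ≥0∞) (B : ι → Fin n → ℝ) (L : ι → ℝ) :
    cubeSum (fun k => c (e k)) (fun k => B (e k)) (fun k => L (e k)) = cubeSum c B L :=
  funext fun x => e.tsum_eq fun i => c i * cubeInd (B i) (L i) x

theorem cubeSum_prod_mul (w : ι → ℝ≥0∞) (c : ι → κ → ℝ≥0∞) (B : ι → κ → Fin n → ℝ)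
    (L : ι → κ → ℝ) (x : Fin n → ℝ) :
    cubeSum (fun q : ι × κ => w q.1 * c q.1 q.2) (fun q => B q.1 q.2) (fun q => L q.1 q.2) x =
      ∑' i, w i * cubeSum (c i) (B i) (L i) x := by
  simp only [cubeSum, ENNReal.tsum_prod', ← ENNReal.tsum_mul_left, mul_assoc]

theorem cubeSum_prod_le (w : ι → ℝ≥0∞) {B : ι → κ → Fin n → ℝ} {L : ι → κ → ℝ}
    (hB : ∀ i, Pairwise fun j j' => Disjoint (cubeSet (B i j) (L i j)) (cubeSet (B i j') (L i j')))
    {A : ι → Fin n → ℝ} {l : ι → ℝ} (hBA : ∀ i j, cubeSet (B i j) (L i j) ⊆ cubeSet (A i) (l i))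
    (x : Fin n → ℝ) :
    cubeSum (fun q : ι × κ => w q.1) (fun q => B q.1 q.2) (fun q => L q.1 q.2) x ≤
      cubeSum w A l x := by
  rw [cubeSum, ENNReal.tsum_prod']
  exact ENNReal.tsum_le_tsum fun i => cubeSum_le_mul_cubeInd (hB i) (hBA i) (fun _ => le_rfl) x

end cubeSum

section Whitney

variable {ι κ : Type*}

theorem mul_measure_eq_zero_of_lintegral_cubeSum_rpow_eq_zero [Countable ι]
    {μ : Measure (Fin n → ℝ)} {c : ι → ℝ≥0∞} {B : ι → Fin n → ℝ} {L : ι → ℝ} {q : ℝ}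
    (hq : 0 < q) (h : ∫⁻ x, cubeSum c B L x ^ q ∂μ = 0) (i : ι) :
    c i * μ (cubeSet (B i) (L i)) = 0 := by
  have h' : ∫⁻ x, cubeSum c B L x ∂μ = 0 := by
    rw [lintegral_eq_zero_iff (by fun_prop)] at h ⊢
    filter_upwards [h] with x hx
    exact (ENNReal.rpow_eq_zero_iff_of_pos hq).mp hx
  rw [lintegral_cubeSum, ENNReal.tsum_eq_zero] at h'
  exact h' i

variable {p C0 : ℝ} {σ ω : Measure (Fin n → ℝ)}

theorem div_le_AoffConst (α : ℕ → ℝ) {B B' : ℕ → Fin n → ℝ} {L : ℕ → ℝ}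
    (hL : ∀ k, 0 < L k ∧ dist (B k) (B' k) ≤ C0 * L k) :
    (∫⁻ x, cubeSum (fun k => ENNReal.ofReal (α k ^ 2) * Eavg σ (B k) (L k) ^ 2) B' L x ^ (p / 2)
        ∂ω) ^ (1 / p) /
      (∫⁻ x, cubeSum (fun k => ENNReal.ofReal (α k ^ 2)) B L x ^ (p / 2) ∂σ) ^ (1 / p) ≤
      AoffConst p C0 σ ω :=
  le_iSup_of_le B <| le_iSup_of_le B' <| le_iSup_of_le L <| le_iSup_of_le hL <|
    le_iSup_of_le α le_rfl

/-- Pairs of cubes with nonpositive sidelength are empty, so they may be dropped from the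
supremum defining `AoffConst`, and any countably infinite index set may replace `ℕ`. -/
theorem rpow_lintegral_offset_le_AoffConst_mul [Denumerable ι] [Nonempty (Fin n)]
    (hp : 0 < p) (hC0 : 0 ≤ C0) (α : ι → ℝ) {B B' : ι → Fin n → ℝ} {L : ι → ℝ}
    (hdist : ∀ i, 0 < L i → dist (B i) (B' i) ≤ C0 * L i)
    (hfin : ∫⁻ x, cubeSum (fun i => ENNReal.ofReal (α i ^ 2)) B L x ^ (p / 2) ∂σ ≠ ∞) :
    (∫⁻ x, cubeSum (fun i => ENNReal.ofReal (α i ^ 2) * Eavg σ (B i) (L i) ^ 2) B' L x ^ (p / 2)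
        ∂ω) ^ (1 / p) ≤
      AoffConst p C0 σ ω *
        (∫⁻ x, cubeSum (fun i => ENNReal.ofReal (α i ^ 2)) B L x ^ (p / 2) ∂σ) ^ (1 / p) := by
  refine ENNReal.le_mul_of_div_le ?_ (ENNReal.rpow_ne_top_of_nonneg (by positivity) hfin) ?_
  · let e := (Denumerable.eqv ι).symm
    let t : ℕ → ℝ × (Fin n → ℝ) × (Fin n → ℝ) × ℝ := fun k =>
      if 0 < L (e k) then (α (e k), B (e k), B' (e k), L (e k)) else (0, 0, 0, 1)
    have ht : ∀ k, 0 < (t k).2.2.2 ∧ dist (t k).2.1 (t k).2.2.1 ≤ C0 * (t k).2.2.2 := fun k => by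
      by_cases h : 0 < L (e k) <;> simp [t, h, hdist, hC0]
    have hden : cubeSum (fun k => ENNReal.ofReal ((t k).1 ^ 2)) (fun k => (t k).2.1)
        (fun k => (t k).2.2.2) = cubeSum (fun i => ENNReal.ofReal (α i ^ 2)) B L := by
      refine Eq.trans (funext fun x => tsum_congr fun k => ?_) (cubeSum_comp_equiv e _ _ _)
      by_cases h : 0 < L (e k)
      · simp [t, h]
      · simp [t, h, cubeInd_eq_zero_of_nonpos _ (not_lt.mp h)]
    have hnum : cubeSum (fun k => ENNReal.ofReal ((t k).1 ^ 2) * Eavg σ (t k).2.1 (t k).2.2.2 ^ 2)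
        (fun k => (t k).2.2.1) (fun k => (t k).2.2.2) =
        cubeSum (fun i => ENNReal.ofReal (α i ^ 2) * Eavg σ (B i) (L i) ^ 2) B' L := by
      refine Eq.trans (funext fun x => tsum_congr fun k => ?_) (cubeSum_comp_equiv e _ _ _)
      by_cases h : 0 < L (e k)
      · simp [t, h]
      · simp [t, h, cubeInd_eq_zero_of_nonpos _ (not_lt.mp h)]
    rw [← hden, ← hnum]
    exact div_le_AoffConst _ ht
  · intro h0
    have hσ := mul_measure_eq_zero_of_lintegral_cubeSum_rpow_eq_zero (by positivity)
      ((ENNReal.rpow_eq_zero_iff_of_pos (by positivity)).mp h0)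
    have hcoef : ∀ i, ENNReal.ofReal (α i ^ 2) * Eavg σ (B i) (L i) ^ 2 = 0 := fun i => by
      rcases mul_eq_zero.mp (hσ i) with h | h <;> simp [h, Eavg]
    simp [cubeSum, hcoef, hp]

theorem tsum_mul_mul_cubeSum_le {B : ι → κ → Fin n → ℝ} {L : ι → κ → ℝ}
    (hB : ∀ i, Pairwise fun j j' => Disjoint (cubeSet (B i j) (L i j)) (cubeSet (B i j') (L i j')))
    {A : ι → Fin n → ℝ} {l : ι → ℝ} (hBA : ∀ i j, cubeSet (B i j) (L i j) ⊆ cubeSet (A i) (l i))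
    (a b : ι → ℝ≥0∞) (c : ι → κ → ℝ≥0∞) (x : Fin n → ℝ) :
    ∑' i, a i * b i * cubeSum (c i) (B i) (L i) x ≤
      (∑' i, a i ^ 2 * cubeSum (fun j => c i j ^ 2) (B i) (L i) x) ^ (1 / 2 : ℝ) *
        cubeSum (fun i => b i ^ 2) A l x ^ (1 / 2 : ℝ) := by
  calc ∑' i, a i * b i * cubeSum (c i) (B i) (L i) x
      = ∑' i, (a i * cubeSum (c i) (B i) (L i) x) * (b i * cubeInd (A i) (l i) x) :=
        tsum_congr fun i => by rw [mul_mul_mul_comm, cubeSum_mul_cubeInd (hBA i)]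
    _ ≤ _ := ENNReal.inner_le_Lp_mul_Lq_tsum _ _ Real.HolderConjugate.two_two
    _ = _ := by simp only [ENNReal.rpow_two, mul_pow, cubeSum_sq (hB _), cubeInd_sq]; rfl

theorem tsum_ofReal_abs_pairing_le [Countable ι] [Countable κ] {K : (Fin n → ℝ) → (Fin n → ℝ) → ℝ}
    {CK Ch : ℝ} (hK : ∀ x y, x ≠ y → |K x y| ≤ CK / dist x y ^ n)
    {A A' : ι → Fin n → ℝ} {l : ι → ℝ}
    (hAA' : ∀ i, Disjoint (cubeSet (A i) (l i)) (cubeSet (A' i) (l i)))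
    {B B' : ι → κ → Fin n → ℝ} {L : ι → κ → ℝ}
    (hW : ∀ i, ∫⁻ x in cubeSet (A' i) (l i),
        (∫⁻ y in cubeSet (A i) (l i), ENNReal.ofReal (1 / dist x y ^ n) ∂σ) ∂ω ≤
      ENNReal.ofReal Ch * ∑' j, Eavg σ (B i j) (L i j) * ω (cubeSet (B' i j) (L i j)))
    (a b : ι → ℝ) :
    ∑' i, ENNReal.ofReal |∫ x in cubeSet (A' i) (l i),
        a i * (∫ y in cubeSet (A i) (l i), K x y ∂σ) * b i ∂ω| ≤
      ENNReal.ofReal CK * ENNReal.ofReal Ch * ∫⁻ x, ∑' i, ENNReal.ofReal |a i| *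
        ENNReal.ofReal |b i| * cubeSum (fun j => Eavg σ (B i j) (L i j)) (B' i) (L i) x ∂ω := by
  rw [lintegral_tsum (by fun_prop), ← ENNReal.tsum_mul_left]
  refine ENNReal.tsum_le_tsum fun i => ?_
  rw [lintegral_const_mul' _ _ (by finiteness), lintegral_cubeSum]
  calc _ ≤ ENNReal.ofReal |a i| * ENNReal.ofReal |b i| * ENNReal.ofReal CK *
        (ENNReal.ofReal Ch * ∑' j, Eavg σ (B i j) (L i j) * ω (cubeSet (B' i j) (L i j))) :=
        (ofReal_abs_setIntegral_kernel_le hK (measurableSet_cubeSet _ _)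
          (measurableSet_cubeSet _ _) (hAA' i) _ _).trans (by gcongr; exact hW i)
    _ = _ := by ring

theorem lintegral_tsum_mul_mul_cubeSum_le [Countable ι] [Countable κ] {p' : ℝ}
    (hpq : p.HolderConjugate p') {A' : ι → Fin n → ℝ} {l : ι → ℝ} {B B' : ι → κ → Fin n → ℝ}
    {L : ι → κ → ℝ}
    (hB' : ∀ i, Pairwise fun j j' =>
      Disjoint (cubeSet (B' i j) (L i j)) (cubeSet (B' i j') (L i j')))
    (hB'A' : ∀ i j, cubeSet (B' i j) (L i j) ⊆ cubeSet (A' i) (l i)) (a b : ι → ℝ) :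
    ∫⁻ x, ∑' i, ENNReal.ofReal |a i| * ENNReal.ofReal |b i| *
        cubeSum (fun j => Eavg σ (B i j) (L i j)) (B' i) (L i) x ∂ω ≤
      (∫⁻ x, cubeSum (fun q : ι × κ => ENNReal.ofReal (a q.1 ^ 2) *
          Eavg σ (B q.1 q.2) (L q.1 q.2) ^ 2) (fun q => B' q.1 q.2) (fun q => L q.1 q.2) x ^ (p / 2)
          ∂ω) ^ (1 / p) *
        (∫⁻ x, cubeSum (fun i => ENNReal.ofReal (b i ^ 2)) A' l x ^ (p' / 2) ∂ω) ^ (1 / p') := by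
  refine (lintegral_mono fun x => tsum_mul_mul_cubeSum_le hB' hB'A' _ _ _ x).trans ?_
  refine (ENNReal.lintegral_rpow_half_mul_le ω hpq (by fun_prop) (by fun_prop)).trans_eq ?_
  simp only [ENNReal.ofReal_abs_sq, ← cubeSum_prod_mul]

theorem rpow_lintegral_whitney_offset_le [Denumerable ι] [Denumerable κ] [Nonempty (Fin n)]
    (hp : 0 < p) (hC0 : 0 ≤ C0) {A : ι → Fin n → ℝ} {l : ι → ℝ} {B B' : ι → κ → Fin n → ℝ}
    {L : ι → κ → ℝ}
    (hB : ∀ i, Pairwise fun j j' => Disjoint (cubeSet (B i j) (L i j)) (cubeSet (B i j') (L i j')))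
    (hBA : ∀ i j, cubeSet (B i j) (L i j) ⊆ cubeSet (A i) (l i))
    (hdist : ∀ i j, 0 < L i j → dist (B i j) (B' i j) ≤ C0 * L i j) (a : ι → ℝ)
    (hfin : ∫⁻ x, cubeSum (fun i => ENNReal.ofReal (a i ^ 2)) A l x ^ (p / 2) ∂σ ≠ ∞) :
    (∫⁻ x, cubeSum (fun q : ι × κ => ENNReal.ofReal (a q.1 ^ 2) *
        Eavg σ (B q.1 q.2) (L q.1 q.2) ^ 2) (fun q => B' q.1 q.2) (fun q => L q.1 q.2) x ^ (p / 2)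
        ∂ω) ^ (1 / p) ≤
      AoffConst p C0 σ ω *
        (∫⁻ x, cubeSum (fun i => ENNReal.ofReal (a i ^ 2)) A l x ^ (p / 2) ∂σ) ^ (1 / p) := by
  have hden : ∫⁻ x, cubeSum (fun q : ι × κ => ENNReal.ofReal (a q.1 ^ 2))
      (fun q => B q.1 q.2) (fun q => L q.1 q.2) x ^ (p / 2) ∂σ ≤
      ∫⁻ x, cubeSum (fun i => ENNReal.ofReal (a i ^ 2)) A l x ^ (p / 2) ∂σ :=
    lintegral_mono fun x => by gcongr; exact cubeSum_prod_le _ hB hBA x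
  refine (rpow_lintegral_offset_le_AoffConst_mul hp hC0 (fun q : ι × κ => a q.1)
    (fun q => hdist q.1 q.2) (ne_top_of_le_ne_top hfin hden)).trans ?_
  gcongr

end Whitney

end Cubes

theorem stmt14 (n : ℕ) (p p' : ℝ) (hp : 1 < p) (hpp' : 1 / p + 1 / p' = 1)
    (CK c1 c2 Ch : ℝ) (Cdσ Cdω : ℝ≥0∞) :
    ∃ C0 : ℝ, 0 < C0 ∧ ∃ C : ℝ≥0∞, 0 < C ∧ C < ∞ ∧
      ∀ (K : (Fin n → ℝ) → (Fin n → ℝ) → ℝ), Measurable (Function.uncurry K) →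
        (∀ x y, x ≠ y → |K x y| ≤ CK / dist x y ^ n) →
        ∀ (σ ω : Measure (Fin n → ℝ)) [IsLocallyFiniteMeasure σ] [IsLocallyFiniteMeasure ω],
          DoublingWith σ Cdσ → DoublingWith ω Cdω →
          (∀ (a a' : Fin n → ℝ) (l : ℝ), 0 < l → AdjacentSiblings a a' l →
            ∃ (bc bc' : ℕ → (Fin n → ℝ)) (ls : ℕ → ℝ),
              (∀ k, 0 ≤ ls k) ∧
              (∀ k, cubeSet (bc k) (ls k) ⊆ cubeSet a l) ∧
              (∀ k, cubeSet (bc' k) (ls k) ⊆ cubeSet a' l) ∧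
              (Pairwise fun k k' =>
                Disjoint (cubeSet (bc k) (ls k)) (cubeSet (bc k') (ls k'))) ∧
              (Pairwise fun k k' =>
                Disjoint (cubeSet (bc' k) (ls k)) (cubeSet (bc' k') (ls k'))) ∧
              (∀ k, 0 < ls k →
                c1 * ls k ≤ dist (bc k) (bc' k) ∧ dist (bc k) (bc' k) ≤ c2 * ls k) ∧
              (∫⁻ x in cubeSet a' l,
                  (∫⁻ y in cubeSet a l, ENNReal.ofReal (1 / dist x y ^ n) ∂σ) ∂ω)
                ≤ ENNReal.ofReal Ch *
                  ∑' k : ℕ, Eavg σ (bc k) (ls k) * ω (cubeSet (bc' k) (ls k))) →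
          WBPconst K p p' σ ω ≤ C * AoffConst p C0 σ ω := by
  have hpq : p.HolderConjugate p' :=
    Real.holderConjugate_iff.mpr ⟨hp, by simpa only [one_div] using hpp'⟩
  refine ⟨max c2 1, by positivity, ENNReal.ofReal CK * ENNReal.ofReal Ch + 1, by positivity,
    by finiteness, fun K _ hK σ ω _ _ _ _ hWhit => ?_⟩
  refine iSup_le fun ac => iSup_le fun ac' => iSup_le fun ls => iSup_le fun hls =>
    iSup_le fun aa => iSup_le fun bb => ?_
  have : Nonempty (Fin n) := (hls 0).2.nonempty
  choose bc bc' lss _ hsub hsub' hdis hdis' hdist hint using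
    fun k => hWhit (ac k) (ac' k) (ls k) (hls k).1 (hls k).2
  refine ENNReal.div_mul_le_of_le_mul ((tsum_ofReal_abs_pairing_le hK
    (fun k => (hls k).2.disjoint) hint aa bb).trans ((mul_le_mul_right
      (lintegral_tsum_mul_mul_cubeSum_le hpq hdis' hsub' aa bb) _).trans_eq
        (mul_assoc _ _ _).symm)) fun hσ => ?_
  calc _ ≤ (ENNReal.ofReal CK * ENNReal.ofReal Ch + 1) *
          (AoffConst p (max c2 1) σ ω * _) := by
          gcongr
          · exact le_self_add
          · exact rpow_lintegral_whitney_offset_le (by positivity) (by positivity) hdis hsub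
              (fun k j h => (hdist k j h).2.trans (by gcongr; exact le_max_left c2 1)) aa
              fun h => hσ ((ENNReal.rpow_eq_top_iff_of_pos (by positivity)).mpr h)
      _ = _ := (mul_assoc _ _ _).symm
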